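/- arXiv:2310.01751 — 2 statements merged into one kernel-verified Lean document; each statement's English description precedes it below -/
import Mathlib

section
/- Suppose σ > 0 and B_j ⪰ σI for every j ∈ {1,…,m}. If d(x) is the minimizer of Q(x,·), then θ(x) = Q(x,d(x)) ≤ −(σ/2)‖d(x)‖². -/
/-!
Scaling a minimizer `d₀` of `Q(x,·)` by `t ∈ (0,1)`: the linear term scales by `t`, the quadratic
term by `t²`, and by convexity `g_j(x + t d₀) - g_j(x) ≤ t (g_j(x + d₀) - g_j(x))`. Hence
`Q(x, t d₀) ≤ t Q(x, d₀) - t(1-t)(σ/2)‖d₀‖²`, and minimality of `d₀` gives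
`Q(x, d₀) ≤ -t (σ/2)‖d₀‖²`; let `t → 1`.
-/

open Filter Topology
open scoped RealInnerProductSpace BigOperators

noncomputable section

namespace NPQN

variable {n m : ℕ}

/-- The quadratic form `⟨d, B d⟩` of a matrix `B` acting on Euclidean space. -/
def mquad (B : Matrix (Fin n) (Fin n) ℝ) (d : EuclideanSpace ℝ (Fin n)) : ℝ :=
  ⟪d, Matrix.toEuclideanLin B d⟫

/-- `B ⪰ σ I`, i.e. `⟨d, B d⟩ ≥ σ‖d‖²` for all `d`. -/
def MatGE (B : Matrix (Fin n) (Fin n) ℝ) (σ : ℝ) : Prop :=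
  ∀ d : EuclideanSpace ℝ (Fin n), σ * ‖d‖ ^ 2 ≤ mquad B d

/-- `Q_j(x,d) = ⟨∇f_j(x), d⟩ + (1/2)⟨d, B_j d⟩ + g_j(x+d) − g_j(x)`. -/
def Qj (f g : Fin m → EuclideanSpace ℝ (Fin n) → ℝ)
    (B : Fin m → Matrix (Fin n) (Fin n) ℝ) (x d : EuclideanSpace ℝ (Fin n)) (j : Fin m) : ℝ :=
  ⟪gradient (f j) x, d⟫ + (1 / 2) * mquad (B j) d + g j (x + d) - g j x

/-- `Q(x,d) = max_j Q_j(x,d)`. -/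
def Qmax (f g : Fin m → EuclideanSpace ℝ (Fin n) → ℝ)
    (B : Fin m → Matrix (Fin n) (Fin n) ℝ) (x d : EuclideanSpace ℝ (Fin n)) : ℝ :=
  ⨆ j, Qj f g B x d j

/-- `θ(x) = inf_d Q(x,d)`. -/
def theta (f g : Fin m → EuclideanSpace ℝ (Fin n) → ℝ)
    (B : Fin m → Matrix (Fin n) (Fin n) ℝ) (x : EuclideanSpace ℝ (Fin n)) : ℝ :=
  ⨅ d, Qmax f g B x d

/-- One-sided directional derivative. -/
def HasDirDeriv (F : EuclideanSpace ℝ (Fin n) → ℝ) (x d : EuclideanSpace ℝ (Fin n)) (c : ℝ) : Prop :=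
  Tendsto (fun t : ℝ => (F (x + t • d) - F x) / t) (𝓝[>] (0 : ℝ)) (𝓝 c)

/-- `x` is a critical point of `F = (F_1,…,F_m)`. -/
def IsCriticalPt (F : Fin m → EuclideanSpace ℝ (Fin n) → ℝ) (x : EuclideanSpace ℝ (Fin n)) : Prop :=
  ¬ ∃ d : EuclideanSpace ℝ (Fin n), ∀ j, ∃ c : ℝ, HasDirDeriv (F j) x d c ∧ c < 0

/-- `ξ` is a subgradient of `g` at `y`. -/
def IsSubgradAt (g : EuclideanSpace ℝ (Fin n) → ℝ) (y ξ : EuclideanSpace ℝ (Fin n)) : Prop :=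
  ∀ z, g y + ⟪ξ, z - y⟫ ≤ g z

/-- Hessian of `f` as the derivative of the gradient. -/
def hess (f : EuclideanSpace ℝ (Fin n) → ℝ) (z : EuclideanSpace ℝ (Fin n)) :
    EuclideanSpace ℝ (Fin n) →L[ℝ] EuclideanSpace ℝ (Fin n) :=
  fderiv ℝ (fun y => gradient f y) z

theorem _root_.ConvexOn.apply_add_smul_sub_le {E : Type*} [AddCommGroup E] [Module ℝ E]
    {g : E → ℝ} (hg : ConvexOn ℝ Set.univ g) (x d : E) {t : ℝ} (ht₀ : 0 ≤ t) (ht₁ : t ≤ 1) :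
    g (x + t • d) - g x ≤ t * (g (x + d) - g x) := by
  have h := hg.2 (Set.mem_univ x) (Set.mem_univ (x + d)) (sub_nonneg.2 ht₁) ht₀ (by ring)
  have hpt : (1 - t) • x + t • (x + d) = x + t • d := by module
  rw [hpt, smul_eq_mul, smul_eq_mul] at h
  linarith

theorem mquad_smul (B : Matrix (Fin n) (Fin n) ℝ) (t : ℝ) (d : EuclideanSpace ℝ (Fin n)) :
    mquad B (t • d) = t ^ 2 * mquad B d := by
  simp only [mquad, LinearMap.map_smul, real_inner_smul_left, real_inner_smul_right]
  ring

section Scaling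

variable {f g : Fin m → EuclideanSpace ℝ (Fin n) → ℝ} {B : Fin m → Matrix (Fin n) (Fin n) ℝ}
  {x d : EuclideanSpace ℝ (Fin n)} {t : ℝ}

theorem Qj_smul_le {j : Fin m} (hg : ConvexOn ℝ Set.univ (g j)) (ht₀ : 0 ≤ t) (ht₁ : t ≤ 1) :
    Qj f g B x (t • d) j ≤ t * Qj f g B x d j - t * (1 - t) / 2 * mquad (B j) d := by
  have hconv := hg.apply_add_smul_sub_le x d ht₀ ht₁
  simp only [Qj, mquad_smul, real_inner_smul_right] at hconv ⊢
  linarith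

theorem Qmax_smul_le [Nonempty (Fin m)] (hg : ∀ j, ConvexOn ℝ Set.univ (g j)) {σ : ℝ}
    (hB : ∀ j, MatGE (B j) σ) (ht₀ : 0 ≤ t) (ht₁ : t ≤ 1) :
    Qmax f g B x (t • d) ≤ t * Qmax f g B x d - t * (1 - t) / 2 * (σ * ‖d‖ ^ 2) := by
  refine ciSup_le fun j => (Qj_smul_le (hg j) ht₀ ht₁).trans ?_
  have hQj : Qj f g B x d j ≤ Qmax f g B x d := le_ciSup (Set.finite_range _).bddAbove j
  have hcoef : 0 ≤ t * (1 - t) / 2 := by have := sub_nonneg.2 ht₁; positivity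
  gcongr
  exact hB j d

end Scaling

theorem theta_eq_Qmax_of_forall_le {f g : Fin m → EuclideanSpace ℝ (Fin n) → ℝ}
    {B : Fin m → Matrix (Fin n) (Fin n) ℝ} {x d₀ : EuclideanSpace ℝ (Fin n)}
    (hmin : ∀ d, Qmax f g B x d₀ ≤ Qmax f g B x d) :
    theta f g B x = Qmax f g B x d₀ :=
  le_antisymm (ciInf_le ⟨_, Set.forall_mem_range.2 hmin⟩ d₀) (le_ciInf hmin)

theorem le_neg_of_forall_le_mul_sub {q c : ℝ}
    (h : ∀ t ∈ Set.Ioo (0 : ℝ) 1, q ≤ t * q - t * (1 - t) * c) : q ≤ -c := by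
  have hbound : ∀ t ∈ Set.Ioo (0 : ℝ) 1, q ≤ -(t * c) := by
    rintro t ⟨ht₀, ht₁⟩
    have h' : (1 - t) * q ≤ (1 - t) * -(t * c) := by nlinarith [h t ⟨ht₀, ht₁⟩]
    exact le_of_mul_le_mul_left h' (sub_pos.2 ht₁)
  have hlim : Tendsto (fun t : ℝ => -(t * c)) (𝓝[<] 1) (𝓝 (-(1 * c))) :=
    ((continuous_id.mul continuous_const).neg.tendsto 1).mono_left nhdsWithin_le_nhds
  rw [one_mul] at hlim
  exact ge_of_tendsto hlim (eventually_of_mem (Ioo_mem_nhdsLT zero_lt_one) hbound)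

theorem theta_le_neg_norm_sq_general
    (n m : ℕ) (hm : 1 ≤ m)
    (f g : Fin m → EuclideanSpace ℝ (Fin n) → ℝ)
    (hgconv : ∀ j, ConvexOn ℝ Set.univ (g j))
    (B : Fin m → Matrix (Fin n) (Fin n) ℝ)
    (σ : ℝ)
    (hB : ∀ j, MatGE (B j) σ)
    (x d0 : EuclideanSpace ℝ (Fin n))
    (hd0min : ∀ d, Qmax f g B x d0 ≤ Qmax f g B x d) :
    theta f g B x = Qmax f g B x d0 ∧
    Qmax f g B x d0 ≤ -(σ / 2) * ‖d0‖ ^ 2 := by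
  have : Nonempty (Fin m) := ⟨⟨0, hm⟩⟩
  refine ⟨theta_eq_Qmax_of_forall_le hd0min, ?_⟩
  have hbound := le_neg_of_forall_le_mul_sub (c := σ / 2 * ‖d0‖ ^ 2) fun t ht =>
    (hd0min (t • d0)).trans <| (Qmax_smul_le hgconv hB ht.1.le ht.2.le).trans_eq (by ring)
  linarith

/-- Suppose `σ > 0` and `B_j ⪰ σI` for every `j`. If `d(x)` minimizes
`Q(x,·)`, then `θ(x) = Q(x,d(x)) ≤ −(σ/2)‖d(x)‖²`. -/
theorem theta_le_neg_norm_sq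
    (n m : ℕ) (hn : 1 ≤ n) (hm : 1 ≤ m)
    (f g : Fin m → EuclideanSpace ℝ (Fin n) → ℝ)
    (hfconv : ∀ j, ConvexOn ℝ Set.univ (f j))
    (hfdiff : ∀ j, ContDiff ℝ 1 (f j))
    (hgconv : ∀ j, ConvexOn ℝ Set.univ (g j))
    (hgcont : ∀ j, Continuous (g j))
    (B : Fin m → Matrix (Fin n) (Fin n) ℝ)
    (hBsymm : ∀ j, (B j).IsSymm)
    (σ : ℝ) (hσ : 0 < σ)
    (hB : ∀ j, MatGE (B j) σ)
    (x d0 : EuclideanSpace ℝ (Fin n))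
    (hd0min : ∀ d, Qmax f g B x d0 ≤ Qmax f g B x d) :
    theta f g B x = Qmax f g B x d0 ∧
    Qmax f g B x d0 ≤ -(σ / 2) * ‖d0‖ ^ 2 :=
  theta_le_neg_norm_sq_general n m hm f g hgconv B σ hB x d0 hd0min

end NPQN
end
end

section
/- Let τ ∈ (0,1), σ > 0 and 0 < ε ≤ σ(1−τ)/3. Let x, x* ∈ ℝⁿ, let each f_j be twice continuously differentiable, let B_1,…,B_m be symmetric matrices with B_j ⪰ σI, let d be a minimizer of Q(x,·) with θ = Q(x,d), and assume θ ≤ −(σ/2)‖d‖². Assume for each j ∈ {1,…,m}: (i) f_j(x+d) ≤ f_j(x) + ⟨∇f_j(x), d⟩ + (1/2)⟨d, ∇²f_j(x) d⟩ + (ε/2)‖d‖²; (ii) ⟨d, (∇²f_j(x) − ∇²f_j(x*)) d⟩ ≤ ε‖d‖²; (iii) ⟨d, (∇²f_j(x*) − B_j) d⟩ ≤ ε‖d‖² (Dennis–Moré criterion); and (iv) F_j(x) ≤ C_j. Then F_j(x + d) ≤ C_j + τθ for every j, i.e., the unit step length satisfies the nonmonotone line-search condition. -/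
open Filter Topology
open scoped RealInnerProductSpace BigOperators

noncomputable section

namespace NPQN

variable {n m : ℕ}

/-! Condition (i) and the two Hessian estimates (ii), (iii) give
`F_j(x + d) ≤ F_j(x) + Q_j(x,d) + (3/2)ε‖d‖²`. Since `Q_j(x,d) ≤ θ ≤ -(σ/2)‖d‖²` and
`3ε ≤ σ(1 - τ)`, the error `(3/2)ε‖d‖²` is absorbed by the fraction `1 - τ` of the
predicted decrease `θ`. -/

theorem Qj_le_Qmax (f g : Fin m → EuclideanSpace ℝ (Fin n) → ℝ)
    (B : Fin m → Matrix (Fin n) (Fin n) ℝ) (x d : EuclideanSpace ℝ (Fin n)) (j : Fin m) :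
    Qj f g B x d j ≤ Qmax f g B x d :=
  le_ciSup (Set.finite_range _).bddAbove j

theorem inner_hess_le_mquad_add {f : EuclideanSpace ℝ (Fin n) → ℝ}
    {B : Matrix (Fin n) (Fin n) ℝ} {x xstar d : EuclideanSpace ℝ (Fin n)} {ε : ℝ}
    (hii : ⟪d, hess f x d - hess f xstar d⟫ ≤ ε * ‖d‖ ^ 2)
    (hiii : ⟪d, hess f xstar d - Matrix.toEuclideanLin B d⟫ ≤ ε * ‖d‖ ^ 2) :
    ⟪d, hess f x d⟫ ≤ mquad B d + 2 * ε * ‖d‖ ^ 2 := by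
  rw [inner_sub_right] at hii hiii
  unfold mquad
  linarith

theorem add_le_add_Qj_of_hess_estimates {f g : Fin m → EuclideanSpace ℝ (Fin n) → ℝ}
    {B : Fin m → Matrix (Fin n) (Fin n) ℝ} {x xstar d : EuclideanSpace ℝ (Fin n)} {ε : ℝ}
    {j : Fin m}
    (hi : f j (x + d) ≤ f j x + ⟪gradient (f j) x, d⟫
      + 1 / 2 * ⟪d, hess (f j) x d⟫ + ε / 2 * ‖d‖ ^ 2)
    (hii : ⟪d, hess (f j) x d - hess (f j) xstar d⟫ ≤ ε * ‖d‖ ^ 2)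
    (hiii : ⟪d, hess (f j) xstar d - Matrix.toEuclideanLin (B j) d⟫ ≤ ε * ‖d‖ ^ 2) :
    f j (x + d) + g j (x + d) ≤ f j x + g j x + Qj f g B x d j + 3 / 2 * ε * ‖d‖ ^ 2 := by
  have hquad := inner_hess_le_mquad_add hii hiii
  unfold Qj
  linarith

theorem add_three_halves_mul_le_mul {θ r τ σ ε : ℝ} (hτ : τ ≤ 1)
    (hεle : ε ≤ σ * (1 - τ) / 3) (hθle : θ ≤ -(σ / 2) * r) (hr : 0 ≤ r) :
    θ + 3 / 2 * ε * r ≤ τ * θ := by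
  have hτ' : 0 ≤ 1 - τ := sub_nonneg.mpr hτ
  have hεr : ε * r ≤ σ * (1 - τ) / 3 * r := mul_le_mul_of_nonneg_right hεle hr
  have hθτ : (1 - τ) * θ ≤ (1 - τ) * (-(σ / 2) * r) := mul_le_mul_of_nonneg_left hθle hτ'
  linarith

theorem unit_step_accepted_general
    (n m : ℕ)
    (f g : Fin m → EuclideanSpace ℝ (Fin n) → ℝ)
    (τ σ ε : ℝ) (hτ : τ ∈ Set.Ioo (0 : ℝ) 1)
    (hεle : ε ≤ σ * (1 - τ) / 3)
    (x xstar : EuclideanSpace ℝ (Fin n))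
    (B : Fin m → Matrix (Fin n) (Fin n) ℝ)
    (d : EuclideanSpace ℝ (Fin n))
    (θ : ℝ) (hθ : θ = Qmax f g B x d)
    (hθle : θ ≤ -(σ / 2) * ‖d‖ ^ 2)
    (hi : ∀ j, f j (x + d) ≤ f j x + ⟪gradient (f j) x, d⟫
      + 1 / 2 * ⟪d, hess (f j) x d⟫ + ε / 2 * ‖d‖ ^ 2)
    (hii : ∀ j, ⟪d, hess (f j) x d - hess (f j) xstar d⟫ ≤ ε * ‖d‖ ^ 2)
    (hiii : ∀ j, ⟪d, hess (f j) xstar d - Matrix.toEuclideanLin (B j) d⟫ ≤ ε * ‖d‖ ^ 2)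
    (C : Fin m → ℝ) (hiv : ∀ j, f j x + g j x ≤ C j) :
    ∀ j, f j (x + d) + g j (x + d) ≤ C j + τ * θ := by
  intro j
  have hQj : Qj f g B x d j ≤ θ := hθ ▸ Qj_le_Qmax f g B x d j
  calc f j (x + d) + g j (x + d)
      ≤ f j x + g j x + Qj f g B x d j + 3 / 2 * ε * ‖d‖ ^ 2 :=
        add_le_add_Qj_of_hess_estimates (hi j) (hii j) (hiii j)
    _ ≤ C j + (θ + 3 / 2 * ε * ‖d‖ ^ 2) := by linarith [hiv j]
    _ ≤ C j + τ * θ :=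
        (add_le_add_iff_left _).2 (add_three_halves_mul_le_mul hτ.2.le hεle hθle (sq_nonneg _))

/-- Acceptance of the unit step length: under the Dennis–Moré criterion
and the local Hessian estimates (i)–(iv), the unit step satisfies the nonmonotone
line-search condition `F_j(x + d) ≤ C_j + τθ` for every `j`. -/
theorem unit_step_accepted
    (n m : ℕ) (hn : 1 ≤ n) (hm : 1 ≤ m)
    (f g : Fin m → EuclideanSpace ℝ (Fin n) → ℝ)
    (hf2 : ∀ j, ContDiff ℝ 2 (f j))
    (hgconv : ∀ j, ConvexOn ℝ Set.univ (g j))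
    (hgcont : ∀ j, Continuous (g j))
    (τ σ ε : ℝ) (hτ : τ ∈ Set.Ioo (0 : ℝ) 1) (hσ : 0 < σ)
    (hε : 0 < ε) (hεle : ε ≤ σ * (1 - τ) / 3)
    (x xstar : EuclideanSpace ℝ (Fin n))
    (B : Fin m → Matrix (Fin n) (Fin n) ℝ)
    (hBsymm : ∀ j, (B j).IsSymm)
    (hB : ∀ j, MatGE (B j) σ)
    (d : EuclideanSpace ℝ (Fin n))
    (hdmin : ∀ e, Qmax f g B x d ≤ Qmax f g B x e)
    (θ : ℝ) (hθ : θ = Qmax f g B x d)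
    (hθle : θ ≤ -(σ / 2) * ‖d‖ ^ 2)
    (hi : ∀ j, f j (x + d) ≤ f j x + ⟪gradient (f j) x, d⟫
      + 1 / 2 * ⟪d, hess (f j) x d⟫ + ε / 2 * ‖d‖ ^ 2)
    (hii : ∀ j, ⟪d, hess (f j) x d - hess (f j) xstar d⟫ ≤ ε * ‖d‖ ^ 2)
    (hiii : ∀ j, ⟪d, hess (f j) xstar d - Matrix.toEuclideanLin (B j) d⟫ ≤ ε * ‖d‖ ^ 2)
    (C : Fin m → ℝ) (hiv : ∀ j, f j x + g j x ≤ C j) :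
    ∀ j, f j (x + d) + g j (x + d) ≤ C j + τ * θ :=
  unit_step_accepted_general n m f g τ σ ε hτ hεle x xstar B d θ hθ hθle hi hii hiii C hiv

end NPQN
end
end
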